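/- Assume (A1)-(A4), (B1), (B2) and (B4). Then for every u ∈ X⁺ there is a unique point m(u) ∈ M with m(u)⁺ = u, and m(u) is the unique global maximum of J on u + X̃. Moreover the map m : X⁺ → M is a homeomorphism whose inverse is the map M ∋ u ↦ u⁺ ∈ X⁺. -/

import Mathlib

/-!
On each fibre `{h} × W` the functional `I` is coercive by (B1) and T-lower semicontinuous by (A2),
and bounded sequences in the reflexive space `W` have weakly convergent subsequences (sequential
Banach–Alaoglu in the bidual of their separable closed span), so `I (h, ·)` attains its minimum.
A minimiser lies in `M`, while by (B4) a point of `M` is the strict minimum of `I` on its fibre;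
hence `M` meets every fibre exactly once, at the maximiser `m h` of `J = ½‖h‖² - I`.
For continuity, if `hₖ → h` then `I (m hₖ) ≤ I (hₖ, (m h).2) → I (m h)`, so every T-limit of a
subsequence of `m hₖ` lies over `h` with `I` at most `I (m h)`, hence equals `m h`; along it
`I (m hₖ) → I (m h)`, and (A3) turns T-convergence into norm convergence.
-/

open Filter Topology

noncomputable section

variable {H W : Type*} [NormedAddCommGroup H] [InnerProductSpace ℝ H] [CompleteSpace H]
  [NormedAddCommGroup W] [NormedSpace ℝ W] [CompleteSpace W]

/-- `uₙ` T-converges to `l`: `uₙ⁺ → l⁺` in the norm of `H` and `ũₙ ⇀ l̃` weakly in `W`. -/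
def TConv (u : ℕ → H × W) (l : H × W) : Prop :=
  Tendsto (fun n => (u n).1) atTop (𝓝 l.1) ∧
    ∀ φ : W →L[ℝ] ℝ, Tendsto (fun n => φ (u n).2) atTop (𝓝 (φ l.2))

/-- The Nehari–Pankov set
`N = {u ≠ 0 : J(u) > 0 and J'(u)[w] = 0 for all w ∈ ℝu + X̃}`. -/
def NehariPankov (J : H × W → ℝ) : Set (H × W) :=
  {u | u ≠ 0 ∧ 0 < J u ∧ ∀ (s : ℝ) (v : W), fderiv ℝ J u (s • u + ((0 : H), v)) = 0}

/-- The natural constraint `M = {u : I'(u)[v] = 0 for all v ∈ X̃}`. -/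
def NatConstraint (I : H × W → ℝ) : Set (H × W) :=
  {u | ∀ v : W, fderiv ℝ I u ((0 : H), v) = 0}

open TopologicalSpace

theorem Submodule.exists_dual_map_eq_zero_ne_zero {E : Type*} [NormedAddCommGroup E]
    [NormedSpace ℝ E] (Y : Submodule ℝ E) (hY : IsClosed (Y : Set E)) {x : E} (hx : x ∉ Y) :
    ∃ f : StrongDual ℝ E, (∀ y ∈ Y, f y = 0) ∧ f x ≠ 0 := by
  have : IsClosed (Y : Set E) := hY
  obtain ⟨g, hg⟩ := SeparatingDual.exists_ne_zero (R := ℝ) (x := Y.mkQL x)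
    (by simpa [Submodule.mkQL_apply, Submodule.Quotient.mk_eq_zero] using hx)
  exact ⟨g.comp Y.mkQL, fun y hy => by simp [(Submodule.Quotient.mk_eq_zero Y).2 hy], hg⟩

theorem ContinuousLinearMap.exists_norm_le_two_mul_norm_apply {E : Type*} [NormedAddCommGroup E]
    [NormedSpace ℝ E] (f : StrongDual ℝ E) : ∃ x : E, ‖x‖ ≤ 1 ∧ ‖f‖ ≤ 2 * ‖f x‖ := by
  rcases eq_or_ne f 0 with rfl | hf
  · exact ⟨0, by simp⟩
  · obtain ⟨x, hx, hfx⟩ := f.exists_lt_apply_of_lt_opNorm (half_lt_self (norm_pos_iff.2 hf))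
    exact ⟨x, hx.le, by linarith⟩

/-- With `‖xₙ‖ ≤ 1` almost norming a dense sequence `fₙ` of the dual, a functional `g` vanishing
on every `xₙ` satisfies `‖g‖ ≤ 3 ‖fₙ - g‖` for all `n`, hence `g = 0`: the `xₙ` span a dense
subspace. -/
theorem separableSpace_of_separableSpace_strongDual {E : Type*} [NormedAddCommGroup E]
    [NormedSpace ℝ E] [SeparableSpace (StrongDual ℝ E)] : SeparableSpace E := by
  obtain ⟨f, hf⟩ := exists_dense_seq (StrongDual ℝ E)
  choose x hx1 hx2 using fun n => (f n).exists_norm_le_two_mul_norm_apply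
  set Y := (Submodule.span ℝ (Set.range x)).topologicalClosure
  have hxY : ∀ n, x n ∈ Y := fun n =>
    Submodule.le_topologicalClosure _ (Submodule.subset_span (Set.mem_range_self n))
  have hY : Y = ⊤ := by
    refine Submodule.eq_top_iff'.2 fun z => by_contra fun hz => ?_
    obtain ⟨g, hgY, hgz⟩ := Y.exists_dual_map_eq_zero_ne_zero
      (Submodule.isClosed_topologicalClosure _) hz
    have hg : ∀ n, ‖g‖ ≤ 3 * ‖f n - g‖ := fun n => by
      have hfx : ‖f n (x n)‖ ≤ ‖f n - g‖ := by
        simpa [hgY _ (hxY n)] using ((f n - g).le_opNorm (x n)).trans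
          (mul_le_of_le_one_right (norm_nonneg _) (hx1 n))
      linarith [hx2 n, norm_sub_rev g (f n), norm_le_norm_add_norm_sub' g (f n)]
    have hg0 : ‖g‖ ≤ 0 := le_of_forall_pos_le_add fun ε hε => by
      obtain ⟨n, hn⟩ := hf.exists_dist_lt g (by positivity : 0 < ε / 3)
      rw [dist_eq_norm, norm_sub_rev] at hn
      linarith [hg n]
    exact hgz (by simp [norm_le_zero_iff.1 hg0])
  have hYsep : IsSeparable (Y : Set E) := by
    rw [Submodule.topologicalClosure_coe]
    exact ((Set.countable_range x).isSeparable.span).closure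
  rw [hY, Submodule.top_coe] at hYsep
  exact isSeparable_univ_iff.1 hYsep

theorem Submodule.surjective_inclusionInDoubleDual {E : Type*} [NormedAddCommGroup E]
    [NormedSpace ℝ E] (hE : Function.Surjective (NormedSpace.inclusionInDoubleDual ℝ E))
    (Y : Submodule ℝ E) (hY : IsClosed (Y : Set E)) :
    Function.Surjective (NormedSpace.inclusionInDoubleDual ℝ Y) := by
  intro ξ
  let restrict : StrongDual ℝ E →L[ℝ] StrongDual ℝ Y :=
    (ContinuousLinearMap.compL ℝ Y E ℝ).flip Y.subtypeL
  obtain ⟨w, hw⟩ := hE (ξ.comp restrict)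
  have hξ : ∀ φ : StrongDual ℝ E, φ w = ξ (restrict φ) := fun φ => DFunLike.congr_fun hw φ
  have hwY : w ∈ Y := by
    by_contra hwY
    obtain ⟨f, hfY, hfw⟩ := Y.exists_dual_map_eq_zero_ne_zero hY hwY
    have : restrict f = 0 := ContinuousLinearMap.ext fun y => hfY y y.2
    exact hfw (by rw [hξ, this, map_zero])
  refine ⟨⟨w, hwY⟩, ContinuousLinearMap.ext fun ψ => ?_⟩
  obtain ⟨φ, hφ, -⟩ := exists_extension_norm_eq Y ψ
  have : restrict φ = ψ := ContinuousLinearMap.ext hφ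
  rw [NormedSpace.dual_def, ← hφ, ← this, ← hξ]

/-- Sequential Banach–Alaoglu in the bidual, whose predual `StrongDual ℝ E` is separable
because the bidual is. -/
theorem exists_subseq_weakly_tendsto_of_separableSpace {E : Type*} [NormedAddCommGroup E]
    [NormedSpace ℝ E] [SeparableSpace E]
    (hE : Function.Surjective (NormedSpace.inclusionInDoubleDual ℝ E))
    {v : ℕ → E} {B : ℝ} (hB : ∀ n, ‖v n‖ ≤ B) :
    ∃ (σ : ℕ → ℕ) (l : E), StrictMono σ ∧
      ∀ φ : StrongDual ℝ E, Tendsto (fun n => φ (v (σ n))) atTop (𝓝 (φ l)) := by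
  have : SeparableSpace (StrongDual ℝ (StrongDual ℝ E)) := by
    rw [← isSeparable_univ_iff, ← hE.range_eq]
    exact isSeparable_range (NormedSpace.inclusionInDoubleDual ℝ E).continuous
  have : SeparableSpace (StrongDual ℝ E) :=
    separableSpace_of_separableSpace_strongDual (E := StrongDual ℝ E)
  let ξ : ℕ → WeakDual ℝ (StrongDual ℝ E) := fun n =>
    WeakDual.toStrongDual.symm (NormedSpace.inclusionInDoubleDual ℝ E (v n))
  have hξB : ∀ n, ξ n ∈ WeakDual.toStrongDual ⁻¹' Metric.closedBall 0 B := fun n =>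
    (dist_zero_right (NormedSpace.inclusionInDoubleDual ℝ E (v n))).trans_le
      ((NormedSpace.double_dual_bound ℝ E (v n)).trans (hB n))
  obtain ⟨ξ₀, -, σ, hσ, hξσ⟩ := WeakDual.isSeqCompact_closedBall ℝ _ 0 B hξB
  obtain ⟨l, hl⟩ := hE (WeakDual.toStrongDual ξ₀)
  refine ⟨σ, l, hσ, fun φ => ?_⟩
  have := ((WeakDual.eval_continuous φ).tendsto ξ₀).comp hξσ
  rwa [← WeakDual.toStrongDual.symm_apply_apply ξ₀, ← hl] at this

theorem exists_subseq_weakly_tendsto {E : Type*} [NormedAddCommGroup E] [NormedSpace ℝ E]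
    (hE : Function.Surjective (NormedSpace.inclusionInDoubleDual ℝ E))
    {v : ℕ → E} {B : ℝ} (hB : ∀ n, ‖v n‖ ≤ B) :
    ∃ (σ : ℕ → ℕ) (l : E), StrictMono σ ∧
      ∀ φ : StrongDual ℝ E, Tendsto (fun n => φ (v (σ n))) atTop (𝓝 (φ l)) := by
  set Y := (Submodule.span ℝ (Set.range v)).topologicalClosure
  have hvY : ∀ n, v n ∈ Y := fun n =>
    Submodule.le_topologicalClosure _ (Submodule.subset_span (Set.mem_range_self n))
  have : SeparableSpace Y := by
    refine IsSeparable.separableSpace ?_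
    rw [Submodule.topologicalClosure_coe]
    exact ((Set.countable_range v).isSeparable.span).closure
  obtain ⟨σ, l, hσ, hl⟩ := exists_subseq_weakly_tendsto_of_separableSpace
    (Y.surjective_inclusionInDoubleDual hE (Submodule.isClosed_topologicalClosure _))
    (v := fun n => ⟨v n, hvY n⟩) hB
  exact ⟨σ, l, hσ, fun φ => hl (φ.comp Y.subtypeL)⟩

theorem exists_norm_le_of_tendsto_fst_norm_add {E F : Type*} [NormedAddCommGroup E]
    [NormedAddCommGroup F] {f : E × F → ℝ}
    (hf : ∀ u : ℕ → E × F, Tendsto (fun n => ‖u n‖) atTop atTop →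
      Tendsto (fun n => ‖(u n).1‖ + f (u n)) atTop atTop)
    {u : ℕ → E × F} {C D : ℝ} (hD : ∀ n, ‖(u n).1‖ ≤ D) (hC : ∀ n, f (u n) ≤ C) :
    ∃ B, ∀ n, ‖u n‖ ≤ B := by
  by_contra! hu
  choose n hn using fun k : ℕ => hu k
  have hlarge := hf (fun k => u (n k))
    (tendsto_atTop_mono (fun k => (hn k).le) tendsto_natCast_atTop_atTop)
  obtain ⟨k, hk⟩ := (hlarge.eventually_gt_atTop (D + C)).exists
  linarith [hD (n k), hC (n k)]

section NaturalConstraint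

variable {E F : Type*} [NormedAddCommGroup E] [NormedAddCommGroup F] [NormedSpace ℝ F]
  {I : E × F → ℝ}

theorem exists_subseq_tConv
    (hWrefl : Function.Surjective (NormedSpace.inclusionInDoubleDual ℝ F))
    (hB1 : ∀ u : ℕ → E × F, Tendsto (fun n => ‖u n‖) atTop atTop →
      Tendsto (fun n => ‖(u n).1‖ + I (u n)) atTop atTop)
    {u : ℕ → E × F} {h : E} (hu : Tendsto (fun n => (u n).1) atTop (𝓝 h))
    {C : ℝ} (hC : ∀ n, I (u n) ≤ C) :
    ∃ (σ : ℕ → ℕ) (l : F), StrictMono σ ∧ TConv (u ∘ σ) (h, l) := by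
  obtain ⟨D, hD⟩ := hu.norm.bddAbove_range
  obtain ⟨B, hB⟩ := exists_norm_le_of_tendsto_fst_norm_add hB1
    (fun n => hD (Set.mem_range_self n)) hC
  obtain ⟨σ, l, hσ, hl⟩ := exists_subseq_weakly_tendsto hWrefl
    (v := fun n => (u n).2) fun n => (norm_snd_le (u n)).trans (hB n)
  exact ⟨σ, l, hσ, hu.comp hσ.tendsto_atTop, hl⟩

theorem exists_forall_le_on_fiber
    (hWrefl : Function.Surjective (NormedSpace.inclusionInDoubleDual ℝ F))
    (hA1 : ∀ u : E × F, 0 ≤ I u)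
    (hA2 : ∀ (u : ℕ → E × F) (l : E × F), TConv u l →
      I l ≤ Filter.liminf (fun n => I (u n)) atTop)
    (hB1 : ∀ u : ℕ → E × F, Tendsto (fun n => ‖u n‖) atTop atTop →
      Tendsto (fun n => ‖(u n).1‖ + I (u n)) atTop atTop)
    (h : E) : ∃ w : F, ∀ v : F, I (h, w) ≤ I (h, v) := by
  set S := Set.range fun v : F => I (h, v)
  have hS : BddBelow S := ⟨0, by rintro _ ⟨v, rfl⟩; exact hA1 _⟩
  obtain ⟨c, hc_anti, hc, hc_mem⟩ := exists_seq_tendsto_sInf (Set.range_nonempty _) hS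
  choose v hv using hc_mem
  obtain ⟨σ, l, hσ, hTC⟩ := exists_subseq_tConv hWrefl hB1 (u := fun n => (h, v n))
    tendsto_const_nhds (C := c 0) fun n => (hv n).trans_le (hc_anti (Nat.zero_le n))
  have hIσ : Tendsto (fun n => I (h, v (σ n))) atTop (𝓝 (sInf S)) := by
    simp only [hv]
    exact hc.comp hσ.tendsto_atTop
  refine ⟨l, fun w => ?_⟩
  calc I (h, l) ≤ liminf (fun n => I (h, v (σ n))) atTop := hA2 _ _ hTC
    _ = sInf S := hIσ.liminf_eq
    _ ≤ I (h, w) := csInf_le hS ⟨w, rfl⟩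

theorem exists_subseq_tendsto_of_isMin_on_fiber
    (hWrefl : Function.Surjective (NormedSpace.inclusionInDoubleDual ℝ F))
    (hA1 : ∀ u : E × F, 0 ≤ I u)
    (hA2 : ∀ (u : ℕ → E × F) (l : E × F), TConv u l →
      I l ≤ Filter.liminf (fun n => I (u n)) atTop)
    (hA3 : ∀ (u : ℕ → E × F) (l : E × F), TConv u l →
      Tendsto (fun n => I (u n)) atTop (𝓝 (I l)) → Tendsto u atTop (𝓝 l))
    (hB1 : ∀ u : ℕ → E × F, Tendsto (fun n => ‖u n‖) atTop atTop →
      Tendsto (fun n => ‖(u n).1‖ + I (u n)) atTop atTop)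
    (hI : Continuous I) {m : E → E × F} (hm1 : ∀ h, (m h).1 = h)
    (hle : ∀ h v, I (m h) ≤ I (h, v)) (hunique : ∀ h v, I (h, v) ≤ I (m h) → (h, v) = m h)
    {x : ℕ → E} {h : E} (hx : Tendsto x atTop (𝓝 h)) :
    ∃ σ : ℕ → ℕ, Tendsto (fun k => m (x (σ k))) atTop (𝓝 (m h)) := by
  set b : ℕ → ℝ := fun k => I (x k, (m h).2)
  have hb : Tendsto b atTop (𝓝 (I (m h))) := by
    have := (hI.tendsto (h, (m h).2)).comp (hx.prodMk_nhds tendsto_const_nhds)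
    rwa [show (h, (m h).2) = m h from Prod.ext (hm1 h).symm rfl] at this
  have hIb : ∀ k, I (m (x k)) ≤ b k := fun k => hle (x k) (m h).2
  obtain ⟨C, hC⟩ := hb.bddAbove_range
  obtain ⟨σ, l, hσ, hTC⟩ := exists_subseq_tConv hWrefl hB1 (u := fun k => m (x k))
    (by simpa only [hm1] using hx) fun k => (hIb k).trans (hC (Set.mem_range_self k))
  have hbσ := hb.comp hσ.tendsto_atTop
  have hbdd_ge : IsBoundedUnder (· ≥ ·) atTop fun k => I (m (x (σ k))) :=
    isBoundedUnder_of ⟨0, fun k => hA1 _⟩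
  have hbdd_le : IsBoundedUnder (· ≤ ·) atTop fun k => I (m (x (σ k))) :=
    isBoundedUnder_of ⟨C, fun k => (hIb (σ k)).trans (hC (Set.mem_range_self _))⟩
  have hlimsup : limsup (fun k => I (m (x (σ k)))) atTop ≤ I (m h) :=
    (limsup_le_limsup (Eventually.of_forall fun k => hIb (σ k)) hbdd_ge.isCoboundedUnder_le
      hbσ.isBoundedUnder_le).trans_eq hbσ.limsup_eq
  have hIl : Tendsto (fun k => I (m (x (σ k)))) atTop (𝓝 (I (h, l))) :=
    tendsto_of_le_liminf_of_limsup_le (hA2 _ _ hTC) (hlimsup.trans (hle h l)) hbdd_le hbdd_ge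
  have hl : (h, l) = m h := hunique h l (le_of_tendsto_of_tendsto' hIl hbσ fun k => hIb (σ k))
  exact ⟨σ, hl ▸ hA3 _ _ hTC hIl⟩

variable [InnerProductSpace ℝ E]

theorem mem_natConstraint_of_forall_le {u : E × F} (hI : DifferentiableAt ℝ I u)
    (hu : ∀ v : F, I u ≤ I (u.1, v)) : u ∈ NatConstraint I := by
  have hmin : IsLocalMin (fun v : F => I (u.1, v)) u.2 := Eventually.of_forall hu
  have hderiv : HasFDerivAt (fun v : F => I (u.1, v))
      ((fderiv ℝ I u).comp (ContinuousLinearMap.inr ℝ E F)) u.2 :=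
    hI.hasFDerivAt.comp u.2 (hasFDerivAt_prodMk_right u.1 u.2)
  intro v
  simpa using DFunLike.congr_fun (hmin.hasFDerivAt_eq_zero hderiv) v

theorem lt_of_mem_natConstraint
    (hB4 : ∀ u ∈ NatConstraint I, ∀ v : F, v ≠ 0 → I u < I (u + ((0 : E), v)))
    {u w : E × F} (hu : u ∈ NatConstraint I) (hw : w.1 = u.1) (hne : w ≠ u) : I u < I w := by
  have hv : w.2 - u.2 ≠ 0 := sub_ne_zero.2 fun h => hne (Prod.ext hw h)
  have hsum : u + (0, w.2 - u.2) = w := Prod.ext (by simp [hw]) (by simp)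
  simpa only [hsum] using hB4 u hu _ hv

theorem eq_of_mem_natConstraint
    (hB4 : ∀ u ∈ NatConstraint I, ∀ v : F, v ≠ 0 → I u < I (u + ((0 : E), v)))
    {u w : E × F} (hu : u ∈ NatConstraint I) (hw : w ∈ NatConstraint I) (h : u.1 = w.1) :
    u = w := by
  by_contra hne
  exact (lt_of_mem_natConstraint hB4 hu h.symm (Ne.symm hne)).not_gt
    (lt_of_mem_natConstraint hB4 hw h hne)

end NaturalConstraint

theorem statement9_general
    (I J : H × W → ℝ)
    (hWrefl : Function.Surjective (NormedSpace.inclusionInDoubleDual ℝ W))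
    (hJ : ∀ u : H × W, J u = 1 / 2 * ‖u.1‖ ^ 2 - I u)
    -- (A1)
    (hIC1 : ContDiff ℝ 1 I) (hA1 : ∀ u : H × W, 0 ≤ I u)
    -- (A2)
    (hA2 : ∀ (u : ℕ → H × W) (l : H × W), TConv u l →
      I l ≤ Filter.liminf (fun n => I (u n)) atTop)
    -- (A3)
    (hA3 : ∀ (u : ℕ → H × W) (l : H × W), TConv u l →
      Tendsto (fun n => I (u n)) atTop (𝓝 (I l)) → Tendsto u atTop (𝓝 l))
    -- (B1)
    (hB1 : ∀ u : ℕ → H × W, Tendsto (fun n => ‖u n‖) atTop atTop →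
      Tendsto (fun n => ‖(u n).1‖ + I (u n)) atTop atTop)
    -- (B4)
    (hB4 : ∀ u ∈ NatConstraint I, ∀ v : W, v ≠ 0 → I u < I (u + ((0 : H), v)))
    :
    (∀ h : H, ∃! w : H × W, w ∈ NatConstraint I ∧ w.1 = h) ∧
      ∃ m : H → H × W, Continuous m ∧
        (∀ h : H, m h ∈ NatConstraint I ∧ (m h).1 = h ∧
          ∀ w : H × W, w.1 = h → w ≠ m h → J w < J (m h)) ∧
        ∀ w ∈ NatConstraint I, m w.1 = w := by
  choose w hw using exists_forall_le_on_fiber hWrefl hA1 hA2 hB1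
  set m : H → H × W := fun h => (h, w h)
  have hmM : ∀ h, m h ∈ NatConstraint I := fun h =>
    mem_natConstraint_of_forall_le (hIC1.differentiable one_ne_zero _) (hw h)
  have hlt : ∀ h (u : H × W), u.1 = h → u ≠ m h → I (m h) < I u := fun h _ hu hne =>
    lt_of_mem_natConstraint hB4 (hmM h) hu hne
  refine ⟨fun h => ⟨m h, ⟨hmM h, rfl⟩, fun u hu => eq_of_mem_natConstraint hB4 hu.1 (hmM h) hu.2⟩,
    m, ?_, fun h => ⟨hmM h, rfl, fun u hu hne => ?_⟩,
    fun u hu => eq_of_mem_natConstraint hB4 (hmM u.1) hu rfl⟩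
  · have hmin_unique : ∀ h v, I (h, v) ≤ I (m h) → (h, v) = m h := fun h v hv =>
      by_contra fun hne => (hlt h (h, v) rfl hne).not_ge hv
    refine continuous_iff_seqContinuous.2 fun _ _ hx => tendsto_of_subseq_tendsto fun _ hns => ?_
    exact exists_subseq_tendsto_of_isMin_on_fiber hWrefl hA1 hA2 hA3 hB1 hIC1.continuous
      (fun _ => rfl) hw hmin_unique (hx.comp hns)
  · rw [hJ, hJ, hu]
    linarith [hlt h u hu hne]

/-- **Existence and uniqueness of `m` and claim (i) of Theorem 4.6.** Under (A1)-(A4), (B1),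
(B2), (B4), every `u ∈ X⁺` has a unique point `m(u) ∈ M` with `m(u)⁺ = u`, which is the
unique global maximum of `J` on `u + X̃`, and `m : X⁺ → M` is a homeomorphism with inverse
`u ↦ u⁺`. -/
theorem statement9
    (I J : H × W → ℝ)
    (hWrefl : Function.Surjective (NormedSpace.inclusionInDoubleDual ℝ W))
    (hJ : ∀ u : H × W, J u = 1 / 2 * ‖u.1‖ ^ 2 - I u)
    -- (A1)
    (hIC1 : ContDiff ℝ 1 I) (hA1 : ∀ u : H × W, 0 ≤ I u) (hI0 : I 0 = 0)
    -- (A2)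
    (hA2 : ∀ (u : ℕ → H × W) (l : H × W), TConv u l →
      I l ≤ Filter.liminf (fun n => I (u n)) atTop)
    -- (A3)
    (hA3 : ∀ (u : ℕ → H × W) (l : H × W), TConv u l →
      Tendsto (fun n => I (u n)) atTop (𝓝 (I l)) → Tendsto u atTop (𝓝 l))
    -- (A4)
    (r a : ℝ) (hr : 0 < r)
    (ha : a = sInf {c : ℝ | ∃ h : H, ‖h‖ = r ∧ c = J (h, (0 : W))}) (hapos : 0 < a)
    -- (B1)
    (hB1 : ∀ u : ℕ → H × W, Tendsto (fun n => ‖u n‖) atTop atTop →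
      Tendsto (fun n => ‖(u n).1‖ + I (u n)) atTop atTop)
    -- (B2)
    (hB2 : ∀ (t : ℕ → ℝ) (u : ℕ → H × W) (u₀ : H), u₀ ≠ 0 → Tendsto t atTop atTop →
      Tendsto (fun n => (u n).1) atTop (𝓝 u₀) →
      Tendsto (fun n => I (t n • u n) / t n ^ 2) atTop atTop)
    -- (B4)
    (hB4 : ∀ u ∈ NatConstraint I, ∀ v : W, v ≠ 0 → I u < I (u + ((0 : H), v)))
    :
    (∀ h : H, ∃! w : H × W, w ∈ NatConstraint I ∧ w.1 = h) ∧
      ∃ m : H → H × W, Continuous m ∧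
        (∀ h : H, m h ∈ NatConstraint I ∧ (m h).1 = h ∧
          ∀ w : H × W, w.1 = h → w ≠ m h → J w < J (m h)) ∧
        ∀ w ∈ NatConstraint I, m w.1 = w :=
  statement9_general I J hWrefl hJ hIC1 hA1 hA2 hA3 hB1 hB4
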